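/- arXiv:2112.12427 — 4 statements merged into one kernel-verified Lean document; each statement's English description precedes it below -/
import Mathlib

section
/- For every integer n ≥ 1, a_n = (1/n^3) · Σ_{k=1}^{n} k^4 · C(n,k)^2 · C(n+k,k)^2 / ((4(k−1)^2 − 1) · (n+k)^2). -/
/-!
Shift the summation index by one and absorb the factors `k` into the binomial coefficients
via `k * C(n, k) = n * C(n - 1, k - 1)` and `k * C(n + k, k) = (n + k) * C(n + k - 1, k - 1)`:
each summand on the right becomes `n ^ 2` times the corresponding summand of `a n`.
-/

noncomputable def a (n : ℕ) : ℝ :=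
  (1 / (n : ℝ)) * ∑ k ∈ Finset.range n,
    ((n - 1).choose k : ℝ) ^ 2 * ((n + k).choose k : ℝ) ^ 2 / (4 * (k : ℝ) ^ 2 - 1)

lemma Nat.cast_add_one_mul_choose_add_one {R : Type*} [Semiring R] (n k : ℕ) :
    ((k : R) + 1) * ((n + 1).choose (k + 1) : R) = ((n : R) + 1) * (n.choose k : R) := by
  exact_mod_cast congrArg (Nat.cast : ℕ → R)
    ((Nat.mul_comm _ _).trans (Nat.add_one_mul_choose_eq n k).symm)

lemma add_one_pow_four_mul_choose_sq_mul_choose_sq_div_sq {K : Type*} [Field K] [CharZero K]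
    (m k : ℕ) :
    ((k : K) + 1) ^ 4 * ((m + 1).choose (k + 1) : K) ^ 2 *
        ((m + 1 + (k + 1)).choose (k + 1) : K) ^ 2 / ((m : K) + 1 + ((k : K) + 1)) ^ 2 =
      ((m : K) + 1) ^ 2 * (m.choose k : K) ^ 2 * ((m + 1 + k).choose k : K) ^ 2 := by
  have h₁ := Nat.cast_add_one_mul_choose_add_one (R := K) m k
  have h₂ := Nat.cast_add_one_mul_choose_add_one (R := K) (m + 1 + k) k
  rw [show m + 1 + (k + 1) = m + 1 + k + 1 by ring]
  push_cast at h₂ ⊢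
  have hpos : (m : K) + 1 + ((k : K) + 1) ≠ 0 := by norm_cast
  rw [div_eq_iff (pow_ne_zero 2 hpos)]
  calc _ = (((k : K) + 1) * ((m + 1).choose (k + 1) : K)) ^ 2 *
          (((k : K) + 1) * ((m + 1 + k + 1).choose (k + 1) : K)) ^ 2 := by ring
    _ = _ := by rw [h₁, h₂]; ring

theorem a_rewrite (n : ℕ) (hn : 1 ≤ n) :
    a n = (1 / (n : ℝ) ^ 3) * ∑ k ∈ Finset.Icc 1 n,
      (k : ℝ) ^ 4 * (n.choose k : ℝ) ^ 2 * ((n + k).choose k : ℝ) ^ 2 /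
        ((4 * ((k : ℝ) - 1) ^ 2 - 1) * ((n : ℝ) + (k : ℝ)) ^ 2) := by
  obtain ⟨m, rfl⟩ : ∃ m, n = m + 1 := ⟨n - 1, by omega⟩
  rw [a, ← Finset.Ico_add_one_right_eq_Icc, Finset.sum_Ico_eq_sum_range, Nat.add_sub_cancel,
    Nat.add_sub_cancel, Finset.mul_sum, Finset.mul_sum]
  refine Finset.sum_congr rfl fun k _ => ?_
  rw [add_comm 1 k]
  push_cast
  rw [add_sub_cancel_right, div_mul_eq_div_div_swap,
    add_one_pow_four_mul_choose_sq_mul_choose_sq_div_sq]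
  field_simp
end

section
/- For all sufficiently large n, the sequence a_n satisfies the two-sided bound (1/(4n^5)) · A_n ≤ a_n ≤ (1/(16 n^3)) · A_n, where A_n = Σ_{k=0}^{n} C(n,k)^2 · C(n+k,k)^2 is the n-th Apéry number. -/
/-- The Apéry numbers. -/
noncomputable def A (n : ℕ) : ℝ :=
  ∑ k ∈ Finset.range (n + 1), (n.choose k : ℝ) ^ 2 * ((n + k).choose k : ℝ) ^ 2


noncomputable def T (n k : ℕ) : ℝ := (n.choose k : ℝ) ^ 2 * ((n + k).choose k : ℝ) ^ 2

noncomputable def W (n k : ℕ) : ℝ := ((n : ℝ) - k) ^ 2 * T n k / (4 * (k : ℝ) ^ 2 - 1)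

lemma T_nonneg (n k : ℕ) : 0 ≤ T n k := by unfold T; positivity

lemma T_ratio (n k : ℕ) (hk : k + 1 ≤ n) :
    T n (k+1) * ((k:ℝ)+1) ^ 4 = T n k * (((n:ℝ) - k) * ((n:ℝ) + k + 1)) ^ 2 := by
  have h1 : (n.choose (k+1) : ℝ) * ((k:ℝ)+1) = (n.choose k : ℝ) * ((n:ℝ) - k) := by
    calc (n.choose (k+1) : ℝ) * ((k:ℝ)+1) = ((n.choose (k+1) * (k+1) : ℕ) : ℝ) := by push_cast; ring
      _ = ((n.choose k * (n - k) : ℕ) : ℝ) := by rw [Nat.choose_succ_right_eq n k]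
      _ = (n.choose k : ℝ) * ((n:ℝ) - k) := by push_cast [show k ≤ n by omega]; ring
  have h2 : ((n + (k+1)).choose (k+1) : ℝ) * ((k:ℝ)+1) = ((n+k).choose k : ℝ) * ((n:ℝ) + k + 1) := by
    calc ((n + (k+1)).choose (k+1) : ℝ) * ((k:ℝ)+1)
        = (((n + k + 1).choose (k+1) * (k+1) : ℕ) : ℝ) := by
          push_cast [show n + (k+1) = n + k + 1 by ring]; ring
      _ = (((n + k + 1) * (n+k).choose k : ℕ) : ℝ) := by rw [← Nat.add_one_mul_choose_eq (n + k) k]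
      _ = ((n+k).choose k : ℝ) * ((n:ℝ) + k + 1) := by push_cast; ring
  unfold T
  calc (n.choose (k+1) : ℝ)^2 * ((n + (k+1)).choose (k+1) : ℝ)^2 * ((k:ℝ)+1) ^ 4
      = ((n.choose (k+1) : ℝ) * ((k:ℝ)+1))^2 * (((n + (k+1)).choose (k+1) : ℝ) * ((k:ℝ)+1))^2 := by ring
    _ = ((n.choose k : ℝ) * ((n:ℝ) - k))^2 * (((n+k).choose k : ℝ) * ((n:ℝ) + k + 1))^2 := by rw [h1, h2]
    _ = (n.choose k : ℝ)^2 * ((n+k).choose k : ℝ)^2 * (((n:ℝ) - k) * ((n:ℝ) + k + 1)) ^ 2 := by ring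

-- step: 5/4 growth
lemma T_step (n k : ℕ) (h17 : 17 * (k+1)^2 ≤ 8 * n^2) (hk : k + 1 ≤ n) :
    (5/4 : ℝ) * T n k ≤ T n (k+1) := by
  have hratio := T_ratio n k hk
  have hkpos : (0:ℝ) < ((k:ℝ)+1)^4 := by positivity
  rw [← mul_le_mul_iff_of_pos_right hkpos, hratio]
  have hT := T_nonneg n k
  have h17' : 17 * ((k:ℝ)+1)^2 ≤ 8 * (n:ℝ)^2 := by exact_mod_cast h17
  have hk' : (k:ℝ)+1 ≤ (n:ℝ) := by exact_mod_cast hk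
  have key : 9 * ((k:ℝ)+1)^2 ≤ 8 * (((n:ℝ) - k) * ((n:ℝ) + k + 1)) := by nlinarith
  have hjpos : (0:ℝ) ≤ ((k:ℝ)+1)^2 := by positivity
  nlinarith [mul_le_mul key key (by positivity) (by nlinarith), sq_nonneg ((k:ℝ)+1), hT,
    mul_nonneg hT (sq_nonneg (((n:ℝ) - k) * ((n:ℝ) + k + 1)))]



lemma T_mono (n : ℕ) : ∀ j, ∀ i ≤ j, 17 * j^2 ≤ 8 * n^2 → j ≤ n → T n i ≤ T n j := by
  intro j
  induction j with
  | zero => intro i hi _ _; interval_cases i; rfl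
  | succ j ih =>
    intro i hi h17 hjn
    rcases Nat.eq_or_lt_of_le hi with rfl | hlt
    · rfl
    · have h1 : T n i ≤ T n j := ih i (by omega) (by nlinarith) (by omega)
      have h2 : (5/4:ℝ) * T n j ≤ T n (j+1) := T_step n j h17 hjn
      nlinarith [T_nonneg n j]

lemma T_geom (n K : ℕ) : ∀ s, 17 * (K+s)^2 ≤ 8 * n^2 → K + s ≤ n →
    (5/4 : ℝ)^s * T n K ≤ T n (K+s) := by
  intro s
  induction s with
  | zero => intro _ _; simp
  | succ s ih =>
    intro h17 hn
    have c1 : 17 * (K+s)^2 ≤ 8 * n^2 := by nlinarith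
    have c2 : K + s ≤ n := by omega
    rw [Nat.add_succ] at h17 hn
    have h2 : (5/4:ℝ) * T n (K+s) ≤ T n (K+s+1) := T_step n (K+s) h17 hn
    have h1 := ih c1 c2
    calc (5/4:ℝ)^(s+1) * T n K = (5/4) * ((5/4:ℝ)^s * T n K) := by ring
      _ ≤ (5/4) * T n (K+s) := by nlinarith
      _ ≤ T n (K+s+1) := h2
      _ = T n (K+(s+1)) := by ring_nf

-- exponential lemma
lemma exp_aux : ∀ s : ℕ, 160 ≤ s → 27648000 * ((s:ℝ)+1)^3 ≤ (5/4)^s := by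
  intro s hs
  induction s, hs using Nat.le_induction with
  | base =>
    norm_num
  | succ s hs ih =>
    have hx : (160:ℝ) ≤ (s:ℝ) := by exact_mod_cast hs
    have h4 : 4 * ((s:ℝ)+1+1)^3 ≤ 5 * ((s:ℝ)+1)^3 := by
      nlinarith [mul_le_mul_of_nonneg_right hx (sq_nonneg (s:ℝ)),
        mul_le_mul_of_nonneg_right hx (Nat.cast_nonneg s : (0:ℝ) ≤ s)]
    push_cast
    calc (27648000:ℝ) * ((s:ℝ)+1+1)^3 ≤ (5/4) * (27648000 * ((s:ℝ)+1)^3) := by nlinarith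
      _ ≤ (5/4) * (5/4)^s := by nlinarith
      _ = (5/4)^(s+1) := by rw [pow_succ]; ring
    
lemma exp_main (n : ℕ) (hn : 100000 ≤ n) : 128 * (n:ℝ)^3 ≤ (5/4 : ℝ)^(n/60) := by
  set s := n / 60 with hs
  have hs160 : 160 ≤ s := by omega
  have hlt : n < 60 * (s+1) := by omega
  have hlt' : (n:ℝ) < 60 * ((s:ℝ)+1) := by exact_mod_cast hlt
  have h1 := exp_aux s hs160
  have hn0 : (0:ℝ) ≤ (n:ℝ) := by positivity
  nlinarith [pow_le_pow_left₀ hn0 (le_of_lt hlt') 3]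



lemma W_le_T16 (n k : ℕ) (h3k : 2*n + 1 ≤ 3*k) (hk : k < n) : W n k ≤ T n k / 16 := by
  have hk1 : 1 ≤ k := by omega
  have hd : (0:ℝ) < 4 * (k:ℝ)^2 - 1 := by
    have : (1:ℝ) ≤ (k:ℝ) := by exact_mod_cast hk1
    nlinarith
  have hT := T_nonneg n k
  unfold W
  rw [div_le_div_iff₀ hd (by norm_num : (0:ℝ) < 16)]
  have hnk : (1:ℝ) ≤ (n:ℝ) - k := by
    have : (k:ℝ) + 1 ≤ (n:ℝ) := by exact_mod_cast hk
    linarith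
  have h3k' : 2*(n:ℝ) + 1 ≤ 3*(k:ℝ) := by exact_mod_cast h3k
  have key : 16 * ((n:ℝ)-k)^2 + 1 ≤ 4*(k:ℝ)^2 := by nlinarith [sq_nonneg ((n:ℝ)-k-1)]
  nlinarith [mul_le_mul_of_nonneg_right key hT]

lemma W_le_crude (n k : ℕ) (hk : k ≤ n) (B : ℝ) (hB : T n k ≤ B) (hB0 : 0 ≤ B) :
    W n k ≤ (n:ℝ)^2 / 3 * B := by
  have hT := T_nonneg n k
  rcases Nat.eq_zero_or_pos k with rfl | hk1
  · have hW : W n 0 = -((n:ℝ)^2 * T n 0) := by unfold W; norm_num; rw [div_neg, div_one]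
    rw [hW]
    have : (0:ℝ) ≤ (n:ℝ)^2 * T n 0 := by positivity
    have : (0:ℝ) ≤ (n:ℝ)^2 / 3 * B := by positivity
    linarith
  · have hd : (3:ℝ) ≤ 4 * (k:ℝ)^2 - 1 := by
      have : (1:ℝ) ≤ (k:ℝ) := by exact_mod_cast hk1
      nlinarith
    have hkn : (0:ℝ) ≤ (n:ℝ) - k := by
      have : (k:ℝ) ≤ (n:ℝ) := by exact_mod_cast hk
      linarith
    have h2 : ((n:ℝ)-k)^2 ≤ (n:ℝ)^2 := by
      have : (0:ℝ) ≤ (k:ℝ) := by positivity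
      nlinarith
    calc W n k ≤ ((n:ℝ) - k)^2 * T n k / 3 := by
          unfold W
          gcongr
          all_goals first | positivity | linarith
      _ ≤ (n:ℝ)^2 * B / 3 := by gcongr
      _ = (n:ℝ)^2 / 3 * B := by ring

lemma upper (n : ℕ) (hn : 100000 ≤ n) :
    ∑ k ∈ Finset.range n, W n k ≤ (1/16) * ∑ k ∈ Finset.range (n+1), T n k := by
  set K1 := 2*n/3 with hK1
  set t := n/60 with ht
  set K2 := K1 + t with hK2
  have hK2n : K2 < n := by omega
  have hK1n : K1 + 1 ≤ n := by omega
  have h17K2 : 17 * K2^2 ≤ 8 * n^2 := by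
    have h60 : 60 * K2 ≤ 41 * n := by omega
    nlinarith
  -- split the sum
  rw [← Finset.sum_range_add_sum_Ico (W n) (le_of_lt (by omega : K1 + 1 < n))]
  -- Part 1: near region
  have hTK1 : ∀ k ∈ Finset.range (K1+1), W n k ≤ (n:ℝ)^2/3 * T n K1 := by
    intro k hk
    rw [Finset.mem_range] at hk
    exact W_le_crude n k (by omega) (T n K1)
      (T_mono n K1 k (by omega) (by nlinarith [h17K2, Nat.pow_le_pow_left (show K1 ≤ K2 by omega) 2]) (by omega)) (T_nonneg n K1)
  have hpart1 : ∑ k ∈ Finset.range (K1+1), W n k ≤ (K1+1 : ℝ) * ((n:ℝ)^2/3 * T n K1) := by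
    calc ∑ k ∈ Finset.range (K1+1), W n k ≤ ∑ k ∈ Finset.range (K1+1), (n:ℝ)^2/3 * T n K1 :=
          Finset.sum_le_sum hTK1
      _ = (K1+1 : ℝ) * ((n:ℝ)^2/3 * T n K1) := by
          rw [Finset.sum_const, Finset.card_range, nsmul_eq_mul]; push_cast; ring
  -- geometric absorption
  have hgeom : (5/4 : ℝ)^t * T n K1 ≤ T n K2 := T_geom n K1 t h17K2 (by omega)
  have habs : (K1+1 : ℝ) * ((n:ℝ)^2/3 * T n K1) ≤ (1/128) * T n K2 := by
    have hTK1nn := T_nonneg n K1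
    have hexp := exp_main n hn
    have hK1le : (K1 : ℝ) + 1 ≤ (n : ℝ) := by exact_mod_cast hK1n
    calc (K1+1 : ℝ) * ((n:ℝ)^2/3 * T n K1) ≤ (n:ℝ) * ((n:ℝ)^2 * T n K1) := by
          have h0n : (0:ℝ) ≤ (n:ℝ) := by positivity
          nlinarith [mul_nonneg (sq_nonneg (n:ℝ)) hTK1nn]
      _ = (1/128) * ((128 * (n:ℝ)^3) * T n K1) := by ring
      _ ≤ (1/128) * ((5/4:ℝ)^t * T n K1) := by
          have := mul_le_mul_of_nonneg_right hexp hTK1nn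
          linarith
      _ ≤ (1/128) * T n K2 := by linarith
  -- slack at K2
  have hslack : (1/128) * T n K2 ≤ (1/16) * T n K2 - W n K2 := by
    have hTK2 := T_nonneg n K2
    have hWK2 : W n K2 = ((n:ℝ) - K2)^2 * T n K2 / (4 * (K2:ℝ)^2 - 1) := rfl
    have hl : 41 * n ≤ 60 * K2 + 99 := by omega
    have hu : 60 * K2 ≤ 41 * n := by omega
    have hl' : 41 * (n:ℝ) ≤ 60 * (K2:ℝ) + 99 := by exact_mod_cast hl
    have hu' : 60 * (K2:ℝ) ≤ 41 * (n:ℝ) := by exact_mod_cast hu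
    have hn' : (100000:ℝ) ≤ (n:ℝ) := by exact_mod_cast hn
    have hd : (0:ℝ) < 4 * (K2:ℝ)^2 - 1 := by nlinarith
    have hcoeff : ((n:ℝ) - K2)^2 / (4 * (K2:ℝ)^2 - 1) ≤ 7/128 := by
      rw [div_le_div_iff₀ hd (by norm_num : (0:ℝ) < 128)]
      nlinarith [sq_nonneg (60*((n:ℝ) - K2) - (19*(n:ℝ)+99))]
    have : W n K2 ≤ 7/128 * T n K2 := by
      rw [hWK2]
      calc ((n:ℝ) - K2)^2 * T n K2 / (4 * (K2:ℝ)^2 - 1)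
          = (((n:ℝ) - K2)^2 / (4 * (K2:ℝ)^2 - 1)) * T n K2 := by ring
        _ ≤ 7/128 * T n K2 := mul_le_mul_of_nonneg_right hcoeff hTK2
    linarith
  -- far region
  have hK2mem : K2 ∈ Finset.Ico (K1+1) n := by
    rw [Finset.mem_Ico]; omega
  have hfar : ∑ k ∈ Finset.Ico (K1+1) n, W n k
      ≤ W n K2 + ∑ k ∈ (Finset.Ico (K1+1) n).erase K2, T n k / 16 := by
    rw [← Finset.add_sum_erase _ (W n) hK2mem]
    gcongr with k hk
    have hk' := Finset.mem_of_mem_erase hk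
    rw [Finset.mem_Ico] at hk'
    exact W_le_T16 n k (by omega) hk'.2
  have hfar2 : W n K2 + ∑ k ∈ (Finset.Ico (K1+1) n).erase K2, T n k / 16
      = W n K2 - T n K2 / 16 + ∑ k ∈ Finset.Ico (K1+1) n, T n k / 16 := by
    rw [← Finset.add_sum_erase _ (fun k => T n k / 16) hK2mem]
    ring
  -- combine
  have hsub : ∑ k ∈ Finset.Ico (K1+1) n, T n k / 16 ≤ ∑ k ∈ Finset.range (n+1), T n k / 16 := by
    apply Finset.sum_le_sum_of_subset_of_nonneg
    · intro k hk
      rw [Finset.mem_Ico] at hk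
      rw [Finset.mem_range]; omega
    · intro k _ _
      have := T_nonneg n k
      positivity
  have hfinal : (1/16) * ∑ k ∈ Finset.range (n+1), T n k
      = ∑ k ∈ Finset.range (n+1), T n k / 16 := by
    rw [Finset.mul_sum]; congr 1; ext k; ring
  rw [hfinal]
  calc ∑ k ∈ Finset.range (K1+1), W n k + ∑ k ∈ Finset.Ico (K1+1) n, W n k
      ≤ ((1/16) * T n K2 - W n K2)
        + (W n K2 - T n K2 / 16 + ∑ k ∈ Finset.Ico (K1+1) n, T n k / 16) := by
        have := le_trans hpart1 (le_trans habs hslack)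
        linarith [le_trans hfar (le_of_eq hfar2)]
    _ = ∑ k ∈ Finset.Ico (K1+1) n, T n k / 16 := by ring
    _ ≤ ∑ k ∈ Finset.range (n+1), T n k / 16 := hsub



lemma W_ge (n k : ℕ) (hk1 : 1 ≤ k) (hk : k < n) : T n k / (4 * (n:ℝ)^2) ≤ W n k := by
  have hd : (0:ℝ) < 4 * (k:ℝ)^2 - 1 := by
    have : (1:ℝ) ≤ (k:ℝ) := by exact_mod_cast hk1
    nlinarith
  have hT := T_nonneg n k
  have hn0 : (0:ℝ) < 4 * (n:ℝ)^2 := by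
    have : (1:ℝ) ≤ (n:ℝ) := by exact_mod_cast (by omega : 1 ≤ n)
    nlinarith
  unfold W
  rw [div_le_div_iff₀ hn0 hd]
  have hnk : (1:ℝ) ≤ (n:ℝ) - k := by
    have : (k:ℝ) + 1 ≤ (n:ℝ) := by exact_mod_cast hk
    linarith
  have hkn : (k:ℝ) ≤ (n:ℝ) := by exact_mod_cast (le_of_lt hk)
  have h1 : 4*(k:ℝ)^2 - 1 ≤ 4*(n:ℝ)^2 := by nlinarith
  have h2 : 4*(n:ℝ)^2 ≤ ((n:ℝ)-k)^2 * (4*(n:ℝ)^2) := by nlinarith [sq_nonneg ((n:ℝ)-k-1)]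
  nlinarith [mul_le_mul_of_nonneg_right h1 hT, mul_le_mul_of_nonneg_right h2 hT]

lemma T_zero (n : ℕ) : T n 0 = 1 := by simp [T]

lemma T_one (n : ℕ) : T n 1 = (n:ℝ)^2 * ((n:ℝ)+1)^2 := by
  unfold T
  rw [Nat.choose_one_right, Nat.choose_one_right]
  push_cast; ring

lemma T_last (n : ℕ) (hn : 1 ≤ n) :
    T n (n-1) = (n:ℝ)^2 * ((2*n-1).choose (n-1) : ℝ)^2 ∧
    T n n = 4 * ((2*n-1).choose (n-1) : ℝ)^2 := by
  obtain ⟨m, rfl⟩ : ∃ m, n = m + 1 := ⟨n - 1, by omega⟩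
  constructor
  · unfold T
    simp only [Nat.add_sub_cancel]
    rw [Nat.choose_succ_self_right, show 2*(m+1) - 1 = m+1+m from by omega]
    try (push_cast; ring)
  · unfold T
    rw [Nat.choose_self]
    have h2 : (m+1 + (m+1)).choose (m+1) = 2 * (2*(m+1)-1).choose (m+1-1) := by
      have hpascal : (2*m+2).choose (m+1) = (2*m+1).choose m + (2*m+1).choose (m+1) :=
        Nat.succ_sub_one (2*m+1) ▸ (by
          have := Nat.choose_succ_succ (2*m+1) m
          simpa [show 2*m+1+1 = 2*m+2 by ring] using this)
      have hsymm : (2*m+1).choose (m+1) = (2*m+1).choose m := by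
        rw [← Nat.choose_symm (by omega : m+1 ≤ 2*m+1)]
        congr 1; omega
      have : m+1+(m+1) = 2*m+2 := by ring
      rw [this, hpascal, hsymm]
      have : 2*(m+1)-1 = 2*m+1 := by omega
      rw [this]
      have : m+1-1 = m := by omega
      rw [this]; ring
    rw [h2]
    push_cast; ring


lemma key1 (n C : ℝ) (hn : 100000 ≤ n) :
    C^2 / n^2 + n^2 * C^2 / (4*n^2) ≤ (n^2 * C^2) / (4*(n-1)^2 - 1) := by
  have hd1 : (0:ℝ) < 4*(n-1)^2 - 1 := by nlinarith
  have hnne : n ≠ 0 := by positivity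
  have hco : 1/n^2 + 1/4 ≤ n^2/(4*(n-1)^2 - 1) := by
    rw [div_add_div _ _ (by positivity) (by norm_num), div_le_div_iff₀ (by positivity) hd1]
    nlinarith [sq_nonneg (n-1)]
  have e0 : n^2 * C^2 / (4*n^2) = C^2 * (1/4) := by field_simp
  calc C^2 / n^2 + n^2 * C^2 / (4*n^2)
      = C^2 * (1/n^2 + 1/4) := by rw [e0]; ring
    _ ≤ C^2 * (n^2/(4*(n-1)^2 - 1)) := mul_le_mul_of_nonneg_left hco (sq_nonneg C)
    _ = (n^2 * C^2) / (4*(n-1)^2 - 1) := by ring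

lemma key2 (n : ℝ) (hn : 100000 ≤ n) :
    n^2 + 1/(4*n^2) ≤ (n-1)^2 * (n^2 * (n+1)^2) / 3 - n^2 * (n+1)^2 / (4*n^2) := by
  have hnne : n ≠ 0 := by positivity
  have e1 : n^2 * (n+1)^2 / (4*n^2) = (n+1)^2/4 := by field_simp
  rw [e1]
  have e2 : 1/(4*n^2) ≤ 1 := by
    rw [div_le_one (by positivity)]; nlinarith
  have hn0 : (0:ℝ) ≤ n := by linarith
  have h1 : n^2 * n^2 ≤ n^2*(n+1)^2 := by nlinarith
  have h2 : (1:ℝ) ≤ (n-1)^2 := by nlinarith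
  have h3 : n^2*n^2 ≤ (n-1)^2 * (n^2*(n+1)^2) := by nlinarith [sq_nonneg (n*(n+1))]
  have h4 : 3*(n^2 + 1 + (n+1)^2/4) ≤ n^2*n^2 := by nlinarith
  linarith

lemma lower (n : ℕ) (hn : 100000 ≤ n) :
    (1/(4*(n:ℝ)^2)) * ∑ k ∈ Finset.range (n+1), T n k ≤ ∑ k ∈ Finset.range n, W n k := by
  have hn' : (100000:ℝ) ≤ (n:ℝ) := by exact_mod_cast hn
  set g : ℕ → ℝ := fun k => W n k - T n k / (4*(n:ℝ)^2) with hg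
  have hsplit : (∑ k ∈ Finset.range (n+1), T n k) = (∑ k ∈ Finset.range n, T n k) + T n n :=
    Finset.sum_range_succ _ _
  -- reduce to sum of g ≥ T n n / (4n^2)
  have hmain : T n n / (4*(n:ℝ)^2) ≤ ∑ k ∈ Finset.range n, g k := by
    have hsub : ∑ k ∈ ({0, 1, n-1} : Finset ℕ), g k ≤ ∑ k ∈ Finset.range n, g k := by
      apply Finset.sum_le_sum_of_subset_of_nonneg
      · intro k hk
        simp only [Finset.mem_insert, Finset.mem_singleton] at hk
        rw [Finset.mem_range]; omega
      · intro k hk hk'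
        rw [Finset.mem_range] at hk
        simp only [Finset.mem_insert, Finset.mem_singleton] at hk'
        push_neg at hk'
        have : 1 ≤ k := by omega
        have := W_ge n k this hk
        simp only [hg]
        linarith
    have hsum3 : ∑ k ∈ ({0, 1, n-1} : Finset ℕ), g k = g 0 + g 1 + g (n-1) := by
      rw [Finset.sum_insert (by simp; omega), Finset.sum_insert (by simp; omega),
        Finset.sum_singleton]
      ring
    have hC := T_last n (by omega)
    set C : ℝ := ((2*n-1).choose (n-1) : ℝ) with hCdef
    have hC1 : (1:ℝ) ≤ C := by
      have h : 1 ≤ (2*n-1).choose (n-1) := Nat.choose_pos (by omega)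
      rw [hCdef]
      exact_mod_cast h
    have hW0 : W n 0 = -((n:ℝ)^2) := by
      unfold W; rw [T_zero]; norm_num; rw [div_neg, div_one]
    have hW1 : W n 1 = ((n:ℝ)-1)^2 * ((n:ℝ)^2 * ((n:ℝ)+1)^2) / 3 := by
      unfold W; rw [T_one]; norm_num
    have hWn1 : W n (n-1) = ((n:ℝ)^2 * C^2) / (4*((n:ℝ)-1)^2 - 1) := by
      unfold W
      rw [hC.1]
      have : ((n-1 : ℕ) : ℝ) = (n:ℝ) - 1 := by
        push_cast [show 1 ≤ n by omega]; ring
      rw [this]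
      have : (n:ℝ) - ((n:ℝ)-1) = 1 := by ring
      rw [this]; ring_nf
    -- final numeric inequality
    have hg0 : g 0 = -((n:ℝ)^2) - 1/(4*(n:ℝ)^2) := by
      simp only [hg, T_zero, hW0]
    have hg1 : g 1 = ((n:ℝ)-1)^2 * ((n:ℝ)^2 * ((n:ℝ)+1)^2) / 3
        - (n:ℝ)^2 * ((n:ℝ)+1)^2 / (4*(n:ℝ)^2) := by
      simp only [hg]; rw [hW1, T_one]
    have hgn1 : g (n-1) = ((n:ℝ)^2 * C^2) / (4*((n:ℝ)-1)^2 - 1)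
        - (n:ℝ)^2 * C^2 / (4*(n:ℝ)^2) := by
      simp only [hg]; rw [hWn1, hC.1]
      try (rw [show ((n-1 : ℕ) : ℝ) = (n:ℝ) - 1 from by push_cast [show 1 ≤ n by omega]; ring])
    have htarget : T n n / (4*(n:ℝ)^2) = C^2 / (n:ℝ)^2 := by
      rw [hC.2]; field_simp
    rw [htarget]
    refine le_trans ?_ hsub
    rw [hsum3, hg0, hg1, hgn1]
    -- polynomial inequality
    have hk1 := key1 (n:ℝ) C hn'
    have hk2 := key2 (n:ℝ) hn'
    linarith
  calc (1/(4*(n:ℝ)^2)) * ∑ k ∈ Finset.range (n+1), T n k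
      = (∑ k ∈ Finset.range n, T n k / (4*(n:ℝ)^2)) + T n n / (4*(n:ℝ)^2) := by
        rw [hsplit, mul_add, Finset.mul_sum]
        congr 1
        · exact Finset.sum_congr rfl (fun k _ => by ring)
        · ring
    _ ≤ (∑ k ∈ Finset.range n, T n k / (4*(n:ℝ)^2)) + ∑ k ∈ Finset.range n, g k := by linarith
    _ = ∑ k ∈ Finset.range n, W n k := by
        rw [← Finset.sum_add_distrib]
        exact Finset.sum_congr rfl (fun k _ => by simp only [hg]; ring)



lemma a_eq (n : ℕ) (hn : 1 ≤ n) : (n:ℝ)^3 * a n = ∑ k ∈ Finset.range n, W n k := by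
  have hne : (n:ℝ) ≠ 0 := by
    have : (1:ℝ) ≤ (n:ℝ) := by exact_mod_cast hn
    linarith
  have hterm : ∀ k ∈ Finset.range n, W n k
      = (n:ℝ)^2 * (((n-1).choose k : ℝ)^2 * ((n+k).choose k : ℝ)^2 / (4*(k:ℝ)^2-1)) := by
    intro k hk
    rw [Finset.mem_range] at hk
    have hid : ((n-1).choose k : ℝ) * (n:ℝ) = (n.choose k : ℝ) * ((n:ℝ) - k) := by
      have h := Nat.choose_mul_succ_eq (n-1) k
      rw [show n - 1 + 1 = n from by omega] at h
      calc ((n-1).choose k : ℝ) * (n:ℝ) = (((n-1).choose k * n : ℕ) : ℝ) := by push_cast; ring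
        _ = ((n.choose k * (n - k) : ℕ) : ℝ) := by rw [h]
        _ = (n.choose k : ℝ) * ((n:ℝ) - k) := by push_cast [show k ≤ n from by omega]; ring
    have hsq : (n:ℝ)^2 * ((n-1).choose k : ℝ)^2 = ((n:ℝ)-k)^2 * (n.choose k : ℝ)^2 := by
      linear_combination (((n-1).choose k : ℝ) * (n:ℝ)
        + (n.choose k : ℝ) * ((n:ℝ) - k)) * hid
    unfold W T
    rw [mul_div_assoc']
    congr 1
    linear_combination (-(((n+k).choose k : ℝ)^2)) * hsq
  rw [Finset.sum_congr rfl hterm, ← Finset.mul_sum]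
  unfold a
  field_simp

theorem a_bounds :
    ∃ N : ℕ, ∀ n : ℕ, N ≤ n →
      (1 / (4 * (n : ℝ) ^ 5)) * A n ≤ a n ∧ a n ≤ (1 / (16 * (n : ℝ) ^ 3)) * A n := by
  refine ⟨100000, fun n hn => ?_⟩
  have hn1 : 1 ≤ n := by omega
  have hA : A n = ∑ k ∈ Finset.range (n+1), T n k := rfl
  have heq := a_eq n hn1
  have hU := upper n hn
  have hL := lower n hn
  have hn0 : (0:ℝ) < (n:ℝ) := by exact_mod_cast (by omega : 0 < n)
  have hn3 : (0:ℝ) < (n:ℝ)^3 := by positivity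
  constructor
  · rw [hA]
    have h1 : (1/(4*(n:ℝ)^2)) * ∑ k ∈ Finset.range (n+1), T n k ≤ (n:ℝ)^3 * a n := by
      rw [heq]; exact hL
    calc (1 / (4 * (n:ℝ)^5)) * ∑ k ∈ Finset.range (n+1), T n k
        = ((1/(4*(n:ℝ)^2)) * ∑ k ∈ Finset.range (n+1), T n k) / (n:ℝ)^3 := by
          rw [eq_div_iff (ne_of_gt hn3)]; field_simp
      _ ≤ ((n:ℝ)^3 * a n) / (n:ℝ)^3 := (div_le_div_iff_of_pos_right hn3).mpr h1
      _ = a n := by field_simp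
  · rw [hA]
    have h2 : (n:ℝ)^3 * a n ≤ (1/16) * ∑ k ∈ Finset.range (n+1), T n k := by
      rw [heq]; exact hU
    calc a n = ((n:ℝ)^3 * a n) / (n:ℝ)^3 := by field_simp
      _ ≤ ((1/16) * ∑ k ∈ Finset.range (n+1), T n k) / (n:ℝ)^3 := (div_le_div_iff_of_pos_right hn3).mpr h2
      _ = (1 / (16 * (n:ℝ)^3)) * ∑ k ∈ Finset.range (n+1), T n k := by
          rw [div_eq_iff (ne_of_gt hn3)]; field_simp; try ring
end

section
/- The ratio a_{n+1}^{1/(n+1)} / a_n^{1/n} converges to 1 as n → ∞. -/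
/-!
Write `D m = ∑ k, C(m,k) C(m+k,k)` for the central Delannoy numbers. Vandermonde's identity turns
`D m` into `∑ j, C(m,j)² 2^(m-j)`, the sum of the squares of the terms of the binomial expansion
of `(1 + √2)^m`, so Cauchy–Schwarz pins `D m` between `(1 + √2)^(2m) / (m+1)` and `(1 + √2)^(2m)`.
Up to polynomial factors the summands of `a (m+1)` are the squares `(C(m,k) C(m+k,k))²`, apart from
the summand `-1` at `k = 0`; hence `L^n / poly(n) - 2 ≤ a n ≤ 4 L^n` with `L = (1 + √2)^4`. Taking
`n`-th roots, `a n ^ (1/n) → L`, and the ratio tends to `L / L = 1`.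
-/

open Finset Real Filter Topology

def centralDelannoy (m : ℕ) : ℕ := ∑ k ∈ range (m + 1), m.choose k * (m + k).choose k

theorem add_choose_eq_sum_choose_mul_choose (m k : ℕ) :
    (m + k).choose k = ∑ j ∈ range (k + 1), m.choose j * k.choose j := by
  rw [Nat.add_choose_eq, Finset.Nat.sum_antidiagonal_eq_sum_range_succ_mk]
  refine sum_congr rfl fun j hj => ?_
  rw [Nat.choose_symm (Nat.lt_succ_iff.mp (mem_range.mp hj))]

theorem sum_Ico_choose_mul_choose {m j : ℕ} (h : j ≤ m) :
    ∑ k ∈ Ico j (m + 1), m.choose k * k.choose j = m.choose j * 2 ^ (m - j) := by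
  rw [sum_Ico_eq_sum_range, show m + 1 - j = m - j + 1 by omega, ← Nat.sum_range_choose,
    mul_sum]
  refine sum_congr rfl fun i _ => ?_
  simpa using Nat.choose_mul (n := m) (Nat.le_add_right j i)

theorem centralDelannoy_eq_sum (m : ℕ) :
    centralDelannoy m = ∑ j ∈ range (m + 1), m.choose j ^ 2 * 2 ^ (m - j) := by
  simp only [centralDelannoy, add_choose_eq_sum_choose_mul_choose, mul_sum]
  rw [sum_comm' (t' := range (m + 1)) (s' := fun j => Ico j (m + 1))
    (fun k j => by simp only [mem_range, mem_Ico]; omega)]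
  refine sum_congr rfl fun j hj => ?_
  rw [sq, mul_assoc, ← sum_Ico_choose_mul_choose (Nat.lt_succ_iff.mp (mem_range.mp hj)), mul_sum]
  refine sum_congr rfl fun k _ => by ring

theorem sum_choose_mul_sqrt_two_pow (m : ℕ) :
    ∑ j ∈ range (m + 1), (m.choose j : ℝ) * √2 ^ (m - j) = (1 + √2) ^ m := by
  rw [add_pow]
  exact sum_congr rfl fun j _ => by ring

theorem centralDelannoy_eq_sum_sq (m : ℕ) :
    (centralDelannoy m : ℝ) = ∑ j ∈ range (m + 1), ((m.choose j : ℝ) * √2 ^ (m - j)) ^ 2 := by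
  rw [centralDelannoy_eq_sum]
  push_cast
  refine sum_congr rfl fun j _ => ?_
  rw [mul_pow, ← pow_mul, mul_comm (m - j), pow_mul, sq_sqrt zero_le_two]

theorem centralDelannoy_le (m : ℕ) : (centralDelannoy m : ℝ) ≤ (1 + √2) ^ (2 * m) := by
  rw [centralDelannoy_eq_sum_sq, mul_comm, pow_mul, ← sum_choose_mul_sqrt_two_pow]
  exact sum_sq_le_sq_sum_of_nonneg fun j _ => by positivity

theorem pow_le_succ_mul_centralDelannoy (m : ℕ) :
    (1 + √2) ^ (2 * m) ≤ (m + 1) * (centralDelannoy m : ℝ) := by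
  rw [centralDelannoy_eq_sum_sq, mul_comm, pow_mul, ← sum_choose_mul_sqrt_two_pow]
  simpa using sq_sum_le_card_mul_sum_sq (s := range (m + 1))
    (f := fun j => (m.choose j : ℝ) * √2 ^ (m - j))

theorem cast_centralDelannoy (m : ℕ) :
    (centralDelannoy m : ℝ) = ∑ k ∈ range (m + 1), (m.choose k : ℝ) * (m + k).choose k := by
  push_cast [centralDelannoy]; rfl

theorem sum_sq_choose_mul_choose_le (m : ℕ) :
    ∑ k ∈ range (m + 1), ((m.choose k : ℝ) * (m + k).choose k) ^ 2 ≤ (1 + √2) ^ (4 * m) :=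
  calc ∑ k ∈ range (m + 1), ((m.choose k : ℝ) * (m + k).choose k) ^ 2
      ≤ (centralDelannoy m : ℝ) ^ 2 := by
        rw [cast_centralDelannoy]
        exact sum_sq_le_sq_sum_of_nonneg fun k _ => by positivity
    _ ≤ ((1 + √2) ^ (2 * m)) ^ 2 := by gcongr; exact centralDelannoy_le m
    _ = (1 + √2) ^ (4 * m) := by ring

theorem pow_le_succ_pow_mul_sum_sq_choose_mul_choose (m : ℕ) :
    (1 + √2) ^ (4 * m)
      ≤ ((m : ℝ) + 1) ^ 3 * ∑ k ∈ range (m + 1), ((m.choose k : ℝ) * (m + k).choose k) ^ 2 :=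
  calc (1 + √2) ^ (4 * m) = ((1 + √2) ^ (2 * m)) ^ 2 := by ring
    _ ≤ (((m : ℝ) + 1) * centralDelannoy m) ^ 2 := by
        gcongr; exact pow_le_succ_mul_centralDelannoy m
    _ ≤ ((m : ℝ) + 1) ^ 2
          * ((m + 1) * ∑ k ∈ range (m + 1), ((m.choose k : ℝ) * (m + k).choose k) ^ 2) := by
        rw [mul_pow]
        gcongr
        simpa [cast_centralDelannoy] using sq_sum_le_card_mul_sum_sq (s := range (m + 1))
          (f := fun k => (m.choose k : ℝ) * (m + k).choose k)
    _ = _ := by ring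

theorem choose_succ_add_le (m k : ℕ) (hk : k ≤ m + 1) :
    (m + 1 + k).choose k ≤ 2 * (m + k).choose k := by
  have h := Nat.choose_mul_succ_eq (m + k) k
  rw [show m + k + 1 = m + 1 + k by omega, show m + 1 + k - k = m + 1 by omega] at h
  nlinarith

noncomputable def aSummand (m k : ℕ) : ℝ :=
  (m.choose k : ℝ) ^ 2 * ((m + 1 + k).choose k : ℝ) ^ 2 / (4 * (k : ℝ) ^ 2 - 1)

theorem a_succ (m : ℕ) : a (m + 1) = 1 / ((m : ℝ) + 1) * ∑ k ∈ range (m + 1), aSummand m k := by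
  simp [a, aSummand]

theorem aSummand_le {m k : ℕ} (hk : k ≤ m) :
    aSummand m k ≤ 4 * ((m.choose k : ℝ) * (m + k).choose k) ^ 2 := by
  have hchoose : ((m + 1 + k).choose k : ℝ) ≤ 2 * (m + k).choose k := by
    exact_mod_cast choose_succ_add_le m k (by omega)
  have hnum : (m.choose k : ℝ) ^ 2 * ((m + 1 + k).choose k : ℝ) ^ 2
      ≤ 4 * ((m.choose k : ℝ) * (m + k).choose k) ^ 2 := by
    rw [show 4 * ((m.choose k : ℝ) * (m + k).choose k) ^ 2
      = (m.choose k : ℝ) ^ 2 * (2 * (m + k).choose k) ^ 2 by ring]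
    gcongr
  rcases Nat.eq_zero_or_pos k with rfl | hk0
  · norm_num [aSummand]
  · have hden : (1 : ℝ) ≤ 4 * (k : ℝ) ^ 2 - 1 := by
      have : (1 : ℝ) ≤ k := by exact_mod_cast hk0
      nlinarith
    exact (div_le_self (by positivity) hden).trans hnum

theorem le_aSummand {m k : ℕ} (hk : k ≤ m) :
    ((m.choose k : ℝ) * (m + k).choose k) ^ 2 / (4 * ((m : ℝ) + 1) ^ 2) - 2 ≤ aSummand m k := by
  rcases Nat.eq_zero_or_pos k with rfl | hk0
  · have hden : (1 : ℝ) ≤ 4 * ((m : ℝ) + 1) ^ 2 := by nlinarith [(m.cast_nonneg : (0 : ℝ) ≤ m)]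
    have h0 : aSummand m 0 = -1 := by norm_num [aSummand]
    simp only [h0, Nat.choose_zero_right, Nat.cast_one, mul_one, one_pow]
    linarith [div_le_one_of_le₀ hden (by positivity)]
  · have hk1 : (1 : ℝ) ≤ k := by exact_mod_cast hk0
    have hkm : (k : ℝ) ≤ m := by exact_mod_cast hk
    have hchoose : ((m + k).choose k : ℝ) ≤ (m + 1 + k).choose k := by
      exact_mod_cast Nat.choose_le_choose k (by omega)
    have hterm : ((m.choose k : ℝ) * (m + k).choose k) ^ 2 / (4 * ((m : ℝ) + 1) ^ 2)
        ≤ aSummand m k := by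
      rw [aSummand, mul_pow]
      apply div_le_div₀ (by positivity) (by gcongr) (by nlinarith) (by nlinarith)
    linarith

theorem a_succ_le (m : ℕ) : a (m + 1) ≤ 4 * (1 + √2) ^ (4 * m) := by
  have hsum : ∑ k ∈ range (m + 1), aSummand m k ≤ 4 * (1 + √2) ^ (4 * m) :=
    calc ∑ k ∈ range (m + 1), aSummand m k
        ≤ 4 * ∑ k ∈ range (m + 1), ((m.choose k : ℝ) * (m + k).choose k) ^ 2 := by
          rw [mul_sum]
          exact sum_le_sum fun k hk => aSummand_le (Nat.lt_succ_iff.mp (mem_range.mp hk))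
      _ ≤ 4 * (1 + √2) ^ (4 * m) := by gcongr; exact sum_sq_choose_mul_choose_le m
  rw [a_succ]
  refine (mul_le_mul_of_nonneg_left hsum (by positivity)).trans ?_
  exact mul_le_of_le_one_left (by positivity) (div_le_one_of_le₀ (by simp) (by positivity))

theorem le_a_succ (m : ℕ) : (1 + √2) ^ (4 * m) / (4 * ((m : ℝ) + 1) ^ 6) - 2 ≤ a (m + 1) := by
  have hsum : (1 + √2) ^ (4 * m) / (4 * ((m : ℝ) + 1) ^ 5) - 2 * (m + 1)
      ≤ ∑ k ∈ range (m + 1), aSummand m k :=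
    calc (1 + √2) ^ (4 * m) / (4 * ((m : ℝ) + 1) ^ 5) - 2 * (m + 1)
        ≤ (∑ k ∈ range (m + 1), ((m.choose k : ℝ) * (m + k).choose k) ^ 2)
            / (4 * ((m : ℝ) + 1) ^ 2) - 2 * (m + 1) := by
          apply sub_le_sub_right
          rw [div_le_div_iff₀ (by positivity) (by positivity)]
          nlinarith [pow_le_succ_pow_mul_sum_sq_choose_mul_choose m]
      _ = ∑ k ∈ range (m + 1), (((m.choose k : ℝ) * (m + k).choose k) ^ 2
            / (4 * ((m : ℝ) + 1) ^ 2) - 2) := by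
          rw [sum_sub_distrib, ← sum_div]; simp [mul_comm]
      _ ≤ ∑ k ∈ range (m + 1), aSummand m k :=
          sum_le_sum fun k hk => le_aSummand (Nat.lt_succ_iff.mp (mem_range.mp hk))
  rw [a_succ]
  calc (1 + √2) ^ (4 * m) / (4 * ((m : ℝ) + 1) ^ 6) - 2
      = 1 / ((m : ℝ) + 1) * ((1 + √2) ^ (4 * m) / (4 * ((m : ℝ) + 1) ^ 5) - 2 * (m + 1)) := by
        field_simp
    _ ≤ 1 / ((m : ℝ) + 1) * ∑ k ∈ range (m + 1), aSummand m k := by gcongr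

theorem tendsto_const_pow_div_pow_atTop (p : ℕ) {L : ℝ} (hL : 1 < L) :
    Tendsto (fun n : ℕ => L ^ n / (n : ℝ) ^ p) atTop atTop := by
  have hpos : ∀ᶠ n : ℕ in atTop, (n : ℝ) ^ p / L ^ n ∈ Set.Ioi (0 : ℝ) := by
    filter_upwards [eventually_ge_atTop 1] with n hn
    have : (0 : ℝ) < n := by exact_mod_cast hn
    exact Set.mem_Ioi.2 (div_pos (pow_pos this p) (by positivity))
  have h := (tendsto_nhdsWithin_iff.2
    ⟨tendsto_pow_const_div_const_pow_of_one_lt p hL, hpos⟩).inv_tendsto_nhdsGT_zero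
  exact h.congr fun n => inv_div _ _

theorem tendsto_mul_pow_div_pow_rpow_one_div {c L : ℝ} (hc : 0 < c) (hL : 0 ≤ L) (p : ℕ) :
    Tendsto (fun n : ℕ => (c * L ^ n / (n : ℝ) ^ p) ^ (1 / (n : ℝ))) atTop (𝓝 L) := by
  have hroot : Tendsto (fun n : ℕ => c ^ (1 / (n : ℝ)) * L / ((n : ℝ) ^ (1 / (n : ℝ))) ^ p)
      atTop (𝓝 (1 * L / 1 ^ p)) := by
    have hc1 : Tendsto (fun n : ℕ => c ^ (1 / (n : ℝ))) atTop (𝓝 1) := by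
      simpa [Function.comp_def] using ((continuousAt_const_rpow hc.ne').tendsto.comp
        (tendsto_one_div_atTop_nhds_zero_nat (𝕜 := ℝ)))
    have hn1 := (tendsto_rpow_div.comp (tendsto_natCast_atTop_atTop (R := ℝ))).pow p
    exact (hc1.mul_const L).div hn1 (by simp)
  rw [one_mul, one_pow, div_one] at hroot
  refine hroot.congr' ?_
  filter_upwards [eventually_ge_atTop 1] with n hn
  have hn0 : (n : ℝ) ≠ 0 := by positivity
  rw [div_rpow (by positivity) (by positivity), mul_rpow hc.le (by positivity), one_div,
    pow_rpow_inv_natCast hL (by omega), ← rpow_pow_comm (Nat.cast_nonneg n)]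

theorem tendsto_rpow_one_div_of_le_of_le {u : ℕ → ℝ} {L c d C : ℝ} (p : ℕ) (hL : 1 < L)
    (hc : 0 < c) (hC : 0 < C) (hlow : ∀ᶠ n : ℕ in atTop, c * L ^ n / (n : ℝ) ^ p - d ≤ u n)
    (hup : ∀ᶠ n in atTop, u n ≤ C * L ^ n) :
    Tendsto (fun n : ℕ => u n ^ (1 / (n : ℝ))) atTop (𝓝 L) := by
  have hlow' : ∀ᶠ n : ℕ in atTop, c / 2 * L ^ n / (n : ℝ) ^ p ≤ u n := by
    have hgrow := (tendsto_const_pow_div_pow_atTop p hL).const_mul_atTop (half_pos hc)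
    filter_upwards [hlow, hgrow.eventually_ge_atTop d] with n hn hd
    rw [mul_div_assoc] at hn ⊢
    linarith
  have hupper : Tendsto (fun n : ℕ => (C * L ^ n) ^ (1 / (n : ℝ))) atTop (𝓝 L) := by
    simpa using tendsto_mul_pow_div_pow_rpow_one_div hC (by linarith) 0
  refine tendsto_of_tendsto_of_tendsto_of_le_of_le'
    (tendsto_mul_pow_div_pow_rpow_one_div (half_pos hc) (by linarith) p) hupper ?_ ?_
  · filter_upwards [hlow'] with n hn
    exact rpow_le_rpow (by positivity) hn (one_div_nonneg.2 n.cast_nonneg)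
  · filter_upwards [hlow', hup] with n hn hn'
    have hpos : 0 ≤ c / 2 * L ^ n / (n : ℝ) ^ p := by positivity
    exact rpow_le_rpow (hpos.trans hn) hn' (one_div_nonneg.2 n.cast_nonneg)

theorem tendsto_a_rpow_one_div :
    Tendsto (fun n : ℕ => a n ^ (1 / (n : ℝ))) atTop (𝓝 ((1 + √2) ^ 4)) := by
  have hL : 1 < (1 + √2) ^ 4 := one_lt_pow₀ (lt_add_of_pos_right 1 (by positivity)) (by norm_num)
  refine tendsto_rpow_one_div_of_le_of_le (c := 1 / (4 * (1 + √2) ^ 4)) (d := 2) (C := 4) 6 hL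
    (by positivity) (by norm_num) ?_ ?_
  all_goals refine eventually_atTop.2 ⟨1, fun n hn => ?_⟩
  all_goals obtain ⟨m, rfl⟩ := Nat.exists_eq_add_of_le' hn
  · convert le_a_succ m using 2
    rw [pow_mul]
    push_cast
    field_simp
    ring
  · refine (a_succ_le m).trans ?_
    rw [← pow_mul]
    gcongr
    · norm_num
    · omega

theorem a_root_ratio_tendsto_one :
    Filter.Tendsto
      (fun n : ℕ => a (n + 1) ^ ((1 : ℝ) / ((n : ℝ) + 1)) / a n ^ ((1 : ℝ) / (n : ℝ)))
      Filter.atTop (nhds 1) := by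
  have hL : (1 + √2) ^ 4 ≠ 0 := by positivity
  have hshift := (tendsto_add_atTop_iff_nat 1).2 tendsto_a_rpow_one_div
  push_cast at hshift
  have h := hshift.div tendsto_a_rpow_one_div hL
  rwa [div_self hL] at h
end

section
/- The ratio b_{n+1}^{1/(n+1)} / b_n^{1/n} converges to 1 as n → ∞. -/
/-! `b n = bNum n / n ^ 3` with an integer sum `bNum n`. `bNum` is monotone, and `bNum (n + 1)`
is at most `3024 * bNum n`: its `k`-th term is a bounded multiple of the `k`-th term of `bNum n`
when `2 * k ≤ n`, and of the `(k - 1)`-st one otherwise, because each binomial ratio that occurs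
is then at most `3`. Together with `bNum n ≥ n ^ 3` this makes `log b` have bounded increments,
so `log b (n + 1) / (n + 1) - log b n / n → 0`; exponentiate. -/

noncomputable def b (n : ℕ) : ℝ :=
  (1 / (n : ℝ) ^ 3) * ∑ k ∈ Finset.range n,
    (3 * (k : ℝ) ^ 2 + 3 * (k : ℝ) + 1) * ((n - 1).choose k : ℝ) ^ 2 * ((n + k).choose k : ℝ) ^ 2

open Finset Filter Topology Real

namespace Nat

theorem choose_succ_le_two_mul_choose {n k : ℕ} (h : 2 * k ≤ n + 1) :
    (n + 1).choose k ≤ 2 * n.choose k := by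
  refine Nat.le_of_mul_le_mul_right ?_ n.succ_pos
  calc (n + 1).choose k * (n + 1) ≤ (n + 1).choose k * (2 * (n + 1 - k)) := by gcongr; omega
    _ = 2 * n.choose k * (n + 1) := by rw [mul_left_comm, ← choose_mul_succ_eq]; ring

theorem succ_choose_succ_le_mul_choose {n k c : ℕ} (h : n + 1 ≤ c * (k + 1)) :
    (n + 1).choose (k + 1) ≤ c * n.choose k := by
  refine Nat.le_of_mul_le_mul_right ?_ k.succ_pos
  calc (n + 1).choose (k + 1) * (k + 1) = (n + 1) * n.choose k := (add_one_mul_choose_eq n k).symm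
    _ ≤ c * (k + 1) * n.choose k := by gcongr
    _ = c * n.choose k * (k + 1) := by ring

end Nat

theorem abs_sub_le_mul_of_abs_succ_sub_le {a : ℕ → ℝ} {M : ℝ}
    (h : ∀ n, |a (n + 1) - a n| ≤ M) (n : ℕ) : |a n - a 0| ≤ M * n := by
  induction n with
  | zero => simp
  | succ n ih =>
    push_cast
    linarith [abs_sub_le (a (n + 1)) (a n) (a 0), h n]

theorem tendsto_div_succ_sub_div_of_abs_succ_sub_le {a : ℕ → ℝ} {M : ℝ}
    (h : ∀ n, |a (n + 1) - a n| ≤ M) :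
    Tendsto (fun n : ℕ => a (n + 1) / ((n : ℝ) + 1) - a n / n) atTop (𝓝 0) := by
  refine squeeze_zero_norm' ?_ (tendsto_const_div_atTop_nhds_zero_nat (2 * M + |a 0|))
  filter_upwards [eventually_ge_atTop 1] with n hn
  have hn : (1 : ℝ) ≤ n := by exact_mod_cast hn
  have hn₀ : (0 : ℝ) < n := by linarith
  have hM : 0 ≤ M := (abs_nonneg _).trans (h 0)
  have hgrowth : |a n / n| ≤ M + |a 0| := by
    rw [abs_div, abs_of_pos hn₀, div_le_iff₀ hn₀]
    nlinarith [abs_sub_le_mul_of_abs_succ_sub_le h n, abs_sub_abs_le_abs_sub (a n) (a 0),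
      abs_nonneg (a 0)]
  have hdiff :
      a (n + 1) / ((n : ℝ) + 1) - a n / n = ((a (n + 1) - a n) - a n / n) / (n + 1) := by
    field_simp
    ring
  calc ‖a (n + 1) / ((n : ℝ) + 1) - a n / n‖
      = |(a (n + 1) - a n) - a n / n| / ((n : ℝ) + 1) := by
        rw [hdiff, Real.norm_eq_abs, abs_div, abs_of_pos (by positivity : (0 : ℝ) < n + 1)]
    _ ≤ (2 * M + |a 0|) / ((n : ℝ) + 1) := by
        gcongr
        linarith [abs_sub (a (n + 1) - a n) (a n / n), h n]
    _ ≤ (2 * M + |a 0|) / n := by gcongr; linarith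

theorem tendsto_rpow_div_rpow_of_abs_log_succ_sub_le {u : ℕ → ℝ} {M : ℝ}
    (hu : ∀ n, 1 ≤ n → 0 < u n) (h : ∀ n, |log (u (n + 1)) - log (u n)| ≤ M) :
    Tendsto
      (fun n : ℕ => u (n + 1) ^ ((1 : ℝ) / ((n : ℝ) + 1)) / u n ^ ((1 : ℝ) / (n : ℝ)))
      atTop (𝓝 1) := by
  have hexp := (continuous_exp.tendsto 0).comp
    (tendsto_div_succ_sub_div_of_abs_succ_sub_le (a := fun n => log (u n)) h)
  rw [exp_zero] at hexp
  refine hexp.congr' ?_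
  filter_upwards [eventually_ge_atTop 1] with n hn
  rw [Function.comp_apply, exp_sub, rpow_def_of_pos (hu n hn), rpow_def_of_pos (hu _ (by omega))]
  simp only [mul_one_div]

theorem abs_log_sub_log_le_log_of_le_mul {x y C : ℝ} (hx : 0 < x) (hy : 0 < y)
    (hxy : x ≤ C * y) (hyx : y ≤ C * x) : |log x - log y| ≤ log C := by
  have hC : 0 < C := pos_of_mul_pos_left (hx.trans_le hxy) hy.le
  have h₁ := log_le_log hx hxy
  have h₂ := log_le_log hy hyx
  rw [log_mul hC.ne' hy.ne'] at h₁
  rw [log_mul hC.ne' hx.ne'] at h₂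
  exact abs_sub_le_iff.mpr ⟨by linarith, by linarith⟩

def bTerm (n k : ℕ) : ℕ := (3 * k ^ 2 + 3 * k + 1) * (n - 1).choose k ^ 2 * (n + k).choose k ^ 2

def bNum (n : ℕ) : ℕ := ∑ k ∈ range n, bTerm n k

theorem b_eq_bNum_div (n : ℕ) : b n = bNum n / (n : ℝ) ^ 3 := by
  simp [b, bNum, bTerm, div_eq_inv_mul]

theorem sum_range_three_mul_sq_add_three_mul_add_one (n : ℕ) :
    ∑ k ∈ range n, (3 * k ^ 2 + 3 * k + 1) = n ^ 3 := by
  induction n with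
  | zero => rfl
  | succ n ih => rw [sum_range_succ, ih]; ring

theorem cube_le_bNum (n : ℕ) : n ^ 3 ≤ bNum n := by
  rw [← sum_range_three_mul_sq_add_three_mul_add_one, bNum]
  refine sum_le_sum fun k hk => ?_
  have hk := mem_range.mp hk
  have h₁ : 1 ≤ (n - 1).choose k ^ 2 := Nat.one_le_pow _ _ (Nat.choose_pos (by omega))
  have h₂ : 1 ≤ (n + k).choose k ^ 2 := Nat.one_le_pow _ _ (Nat.choose_pos (by omega))
  calc 3 * k ^ 2 + 3 * k + 1 = (3 * k ^ 2 + 3 * k + 1) * 1 * 1 := by ring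
    _ ≤ bTerm n k := by unfold bTerm; gcongr

theorem bTerm_le_bTerm_succ (n k : ℕ) : bTerm n k ≤ bTerm (n + 1) k := by
  unfold bTerm
  gcongr <;> omega

theorem bNum_le_bNum_succ (n : ℕ) : bNum n ≤ bNum (n + 1) := by
  unfold bNum
  calc ∑ k ∈ range n, bTerm n k ≤ ∑ k ∈ range (n + 1), bTerm n k :=
        sum_le_sum_of_subset (range_subset_range.mpr n.le_succ)
    _ ≤ ∑ k ∈ range (n + 1), bTerm (n + 1) k := sum_le_sum fun k _ => bTerm_le_bTerm_succ n k

theorem bTerm_succ_le_of_two_mul_le {n k : ℕ} (h : 2 * k ≤ n) :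
    bTerm (n + 1) k ≤ 16 * bTerm n k := by
  have h₁ : n.choose k ≤ 2 * (n - 1).choose k := by
    rcases n with _ | m
    · simp_all
    · exact Nat.choose_succ_le_two_mul_choose (by omega)
  have h₂ : (n + k + 1).choose k ≤ 2 * (n + k).choose k :=
    Nat.choose_succ_le_two_mul_choose (by omega)
  calc bTerm (n + 1) k
      = (3 * k ^ 2 + 3 * k + 1) * n.choose k ^ 2 * (n + k + 1).choose k ^ 2 := by
        simp only [bTerm, Nat.add_sub_cancel, Nat.add_right_comm _ 1 k]
    _ ≤ (3 * k ^ 2 + 3 * k + 1) * (2 * (n - 1).choose k) ^ 2 * (2 * (n + k).choose k) ^ 2 := by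
        gcongr
    _ = 16 * bTerm n k := by simp only [bTerm]; ring

theorem bTerm_succ_succ_le {n k : ℕ} (h : n ≤ 2 * k + 1) (hk : k ≤ n) :
    bTerm (n + 1) (k + 1) ≤ 1008 * bTerm n k := by
  have hw : 3 * (k + 1) ^ 2 + 3 * (k + 1) + 1 ≤ 7 * (3 * k ^ 2 + 3 * k + 1) := by nlinarith
  have h₁ : n.choose (k + 1) ≤ 2 * (n - 1).choose k := by
    rcases n with _ | m
    · simp
    · exact Nat.succ_choose_succ_le_mul_choose (by omega)
  have h₂ : (n + k + 2).choose (k + 1) ≤ 6 * (n + k).choose k := by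
    calc (n + k + 2).choose (k + 1) ≤ 2 * (n + k + 1).choose (k + 1) :=
          Nat.choose_succ_le_two_mul_choose (by omega)
      _ ≤ 2 * (3 * (n + k).choose k) := by
          gcongr; exact Nat.succ_choose_succ_le_mul_choose (by omega)
      _ = 6 * (n + k).choose k := by ring
  calc bTerm (n + 1) (k + 1)
      = (3 * (k + 1) ^ 2 + 3 * (k + 1) + 1) * n.choose (k + 1) ^ 2 *
          (n + k + 2).choose (k + 1) ^ 2 := by
        simp only [bTerm, Nat.add_sub_cancel]; ring_nf
    _ ≤ 7 * (3 * k ^ 2 + 3 * k + 1) * (2 * (n - 1).choose k) ^ 2 *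
          (6 * (n + k).choose k) ^ 2 := by
        gcongr
    _ = 1008 * bTerm n k := by simp only [bTerm]; ring

theorem bTerm_succ_le {n k : ℕ} (hk : k ≤ n) :
    bTerm (n + 1) k ≤ 1008 * (bTerm n k + bTerm n (k - 1)) := by
  by_cases h : 2 * k ≤ n
  · linarith [bTerm_succ_le_of_two_mul_le h]
  · obtain ⟨j, rfl⟩ : ∃ j, k = j + 1 := ⟨k - 1, by omega⟩
    rw [Nat.add_sub_cancel]
    linarith [bTerm_succ_succ_le (n := n) (k := j) (by omega) (by omega)]

theorem bTerm_self {n : ℕ} (hn : 1 ≤ n) : bTerm n n = 0 := by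
  simp [bTerm, Nat.choose_eq_zero_of_lt (show n - 1 < n by omega)]

theorem bNum_succ_le {n : ℕ} (hn : 1 ≤ n) : bNum (n + 1) ≤ 3024 * bNum n := by
  have h₀ : bTerm n 0 ≤ bNum n := single_le_sum (fun _ _ => Nat.zero_le _) (mem_range.mpr hn)
  have hsum : ∑ k ∈ range (n + 1), bTerm n k = bNum n := by
    rw [sum_range_succ, bTerm_self hn, add_zero, bNum]
  have hshift : ∑ k ∈ range (n + 1), bTerm n (k - 1) = bNum n + bTerm n 0 := by
    rw [sum_range_succ', bNum]; rfl
  calc bNum (n + 1) ≤ ∑ k ∈ range (n + 1), 1008 * (bTerm n k + bTerm n (k - 1)) :=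
        sum_le_sum fun k hk => bTerm_succ_le (Nat.lt_succ_iff.mp (mem_range.mp hk))
    _ = 1008 * (bNum n + (bNum n + bTerm n 0)) := by
        rw [← mul_sum, sum_add_distrib, hsum, hshift]
    _ ≤ 3024 * bNum n := by omega

theorem one_le_b {n : ℕ} (hn : 1 ≤ n) : 1 ≤ b n := by
  have hn₀ : (0 : ℝ) < n := by exact_mod_cast hn
  rw [b_eq_bNum_div, le_div_iff₀ (by positivity), one_mul]
  exact_mod_cast cube_le_bNum n

theorem b_succ_le {n : ℕ} (hn : 1 ≤ n) : b (n + 1) ≤ 3024 * b n := by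
  have hn₀ : (0 : ℝ) < n := by exact_mod_cast hn
  have hnum : (bNum (n + 1) : ℝ) ≤ 3024 * bNum n := by exact_mod_cast bNum_succ_le hn
  rw [b_eq_bNum_div, b_eq_bNum_div, mul_div_assoc']
  push_cast
  calc (bNum (n + 1) : ℝ) / ((n : ℝ) + 1) ^ 3 ≤ 3024 * bNum n / ((n : ℝ) + 1) ^ 3 := by
        gcongr
    _ ≤ 3024 * bNum n / (n : ℝ) ^ 3 := by gcongr; linarith

theorem b_le_b_succ {n : ℕ} (hn : 1 ≤ n) : b n ≤ 8 * b (n + 1) := by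
  have hn₁ : (1 : ℝ) ≤ n := by exact_mod_cast hn
  have hnum : (bNum n : ℝ) ≤ bNum (n + 1) := by exact_mod_cast bNum_le_bNum_succ n
  have hcube : ((n : ℝ) + 1) ^ 3 ≤ 8 * (n : ℝ) ^ 3 := by
    calc ((n : ℝ) + 1) ^ 3 ≤ (2 * n) ^ 3 := by gcongr; linarith
      _ = 8 * (n : ℝ) ^ 3 := by ring
  rw [b_eq_bNum_div, b_eq_bNum_div, div_le_iff₀ (by positivity)]
  push_cast
  calc (bNum n : ℝ) ≤ bNum (n + 1) := hnum
    _ = bNum (n + 1) / ((n : ℝ) + 1) ^ 3 * ((n : ℝ) + 1) ^ 3 := by field_simp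
    _ ≤ bNum (n + 1) / ((n : ℝ) + 1) ^ 3 * (8 * (n : ℝ) ^ 3) := by gcongr
    _ = 8 * (bNum (n + 1) / ((n : ℝ) + 1) ^ 3) * (n : ℝ) ^ 3 := by ring

theorem abs_log_b_succ_sub_le (n : ℕ) : |log (b (n + 1)) - log (b n)| ≤ log 3024 := by
  rcases Nat.eq_zero_or_pos n with rfl | hn
  · -- `b 0 = 0` and `b 1 = 1`, so both logarithms vanish
    norm_num [b]
    exact log_nonneg (by norm_num)
  have hb := one_le_b hn
  have hb' := one_le_b (Nat.le_succ_of_le hn)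
  exact abs_log_sub_log_le_log_of_le_mul (by linarith) (by linarith) (b_succ_le hn)
    ((b_le_b_succ hn).trans (by gcongr; norm_num))

theorem b_root_ratio_tendsto_one :
    Filter.Tendsto
      (fun n : ℕ => b (n + 1) ^ ((1 : ℝ) / ((n : ℝ) + 1)) / b n ^ ((1 : ℝ) / (n : ℝ)))
      Filter.atTop (nhds 1) :=
  tendsto_rpow_div_rpow_of_abs_log_succ_sub_le (fun _ hn => one_pos.trans_le (one_le_b hn))
    abs_log_b_succ_sub_le
end
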